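/- For every p > 1, the inclusion 𝓜_{A₁}(ℝ^n) ⊆ 𝓜_{A_p}(ℝ^n) is proper: there exists a measurable function on ℝ^n (for instance f(x) = |x|^α with 0 < α < n(p−1)) that has an A_p(ℝ^n) majorant but no A₁(ℝ^n) majorant. -/

import Mathlib

open MeasureTheory ENNReal

/-- A (nondegenerate) cube in `ℝⁿ` with sides parallel to the axes. -/
def IsCube {n : ℕ} (Q : Set (Fin n → ℝ)) : Prop :=
  ∃ (a : Fin n → ℝ) (l : ℝ), 0 < l ∧
    Q = Set.univ.pi fun i => Set.Icc (a i) (a i + l)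

/-- The domains considered: all of `ℝⁿ` or a cube with sides parallel to the axes. -/
def IsAdmissibleDomain {n : ℕ} (Ω : Set (Fin n → ℝ)) : Prop :=
  Ω = Set.univ ∨ IsCube Ω

/-- The Hardy–Littlewood maximal operator restricted to `Ω`:
`M_Ω f (x) = sup { (1/|Q|) ∫_Q |f| : Q ⊆ Ω a cube with x ∈ Q }`. -/
noncomputable def maximal {n : ℕ} (Ω : Set (Fin n → ℝ)) (f : (Fin n → ℝ) → ℝ)
    (x : Fin n → ℝ) : ℝ≥0∞ :=
  ⨆ (Q : Set (Fin n → ℝ)) (_ : IsCube Q) (_ : Q ⊆ Ω) (_ : x ∈ Q),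
    (volume Q)⁻¹ * ∫⁻ y in Q, ENNReal.ofReal |f y|

/-- A weight on `Ω`: a measurable function, positive a.e. on `Ω`, integrable on every
cube contained in `Ω` (hence locally integrable; integrable when `Ω` is itself a cube). -/
structure IsWeight {n : ℕ} (Ω : Set (Fin n → ℝ)) (w : (Fin n → ℝ) → ℝ) : Prop where
  measurable : Measurable w
  pos : ∀ᵐ x ∂(volume.restrict Ω), 0 < w x
  locInt : ∀ Q : Set (Fin n → ℝ), IsCube Q → Q ⊆ Ω → IntegrableOn w Q

/-- The Muckenhoupt `A₁(Ω)` class: `M_Ω w ≤ C w` a.e. on `Ω`. -/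
def MemA1 {n : ℕ} (Ω : Set (Fin n → ℝ)) (w : (Fin n → ℝ) → ℝ) : Prop :=
  IsWeight Ω w ∧ ∃ C : ℝ, ∀ᵐ x ∂(volume.restrict Ω),
    maximal Ω w x ≤ ENNReal.ofReal (C * w x)

/-- The Muckenhoupt `A_p(Ω)` class for `1 < p < ∞`:
`sup_{Q ⊆ Ω} (avg_Q w) * (avg_Q w^(1-p'))^(p-1) < ∞` where `p' = p/(p-1)`. -/
def MemApGT1 {n : ℕ} (Ω : Set (Fin n → ℝ)) (p : ℝ) (w : (Fin n → ℝ) → ℝ) : Prop :=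
  IsWeight Ω w ∧ ∃ C : ℝ≥0∞, C ≠ ∞ ∧ ∀ Q : Set (Fin n → ℝ), IsCube Q → Q ⊆ Ω →
    ((volume Q)⁻¹ * ∫⁻ x in Q, ENNReal.ofReal (w x)) *
      ((volume Q)⁻¹ * ∫⁻ x in Q, ENNReal.ofReal (w x ^ (1 - p / (p - 1)))) ^ (p - 1) ≤ C

/-- The Muckenhoupt `A_p(Ω)` class for `1 ≤ p < ∞`. -/
def MemA {n : ℕ} (Ω : Set (Fin n → ℝ)) (p : ℝ) (w : (Fin n → ℝ) → ℝ) : Prop :=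
  (p = 1 ∧ MemA1 Ω w) ∨ (1 < p ∧ MemApGT1 Ω p w)

/-- The Muckenhoupt `A_∞(Ω)` class: the union of `A_p(Ω)` over `1 ≤ p < ∞`. -/
def MemAInf {n : ℕ} (Ω : Set (Fin n → ℝ)) (w : (Fin n → ℝ) → ℝ) : Prop :=
  ∃ p : ℝ, 1 ≤ p ∧ MemA Ω p w

/-- Membership in the weighted Lebesgue space `L^p_w(Ω)`: `f` measurable with
`∫_Ω |f|^p w < ∞`. -/
def MemLw {n : ℕ} (Ω : Set (Fin n → ℝ)) (p : ℝ) (w f : (Fin n → ℝ) → ℝ) : Prop :=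
  Measurable f ∧
    ∫⁻ x in Ω, ENNReal.ofReal |f x| ^ p * ENNReal.ofReal (w x) < ⊤

/-- Membership in the (unweighted) Lebesgue space `L^p(Ω)`. -/
def MemLeb {n : ℕ} (Ω : Set (Fin n → ℝ)) (p : ℝ) (f : (Fin n → ℝ) → ℝ) : Prop :=
  MemLw Ω p (fun _ => 1) f

/-- `f ∈ 𝓜_{A_p}(Ω)`: `f` is measurable and `|f| ≤ w` a.e. on `Ω` for some `w ∈ A_p(Ω)`. -/
def HasApMajorant {n : ℕ} (Ω : Set (Fin n → ℝ)) (p : ℝ) (f : (Fin n → ℝ) → ℝ) : Prop :=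
  Measurable f ∧ ∃ w, MemA Ω p w ∧ ∀ᵐ x ∂(volume.restrict Ω), |f x| ≤ w x

/-- `f ∈ 𝓜^r_{A_p}(Ω)`: `f` is measurable and `|f|^r ≤ w` a.e. on `Ω` for some
`w ∈ A_p(Ω)`. -/
def HasApPowMajorant {n : ℕ} (Ω : Set (Fin n → ℝ)) (p r : ℝ) (f : (Fin n → ℝ) → ℝ) : Prop :=
  Measurable f ∧ ∃ w, MemA Ω p w ∧ ∀ᵐ x ∂(volume.restrict Ω), |f x| ^ r ≤ w x

/-- `f ∈ 𝓜_{A_∞}(Ω)`: `f` is measurable and `|f| ≤ w` a.e. on `Ω` for some `w ∈ A_∞(Ω)`. -/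
def HasAInfMajorant {n : ℕ} (Ω : Set (Fin n → ℝ)) (f : (Fin n → ℝ) → ℝ) : Prop :=
  Measurable f ∧ ∃ w, MemAInf Ω w ∧ ∀ᵐ x ∂(volume.restrict Ω), |f x| ≤ w x

/-- Membership in weak `L^p(ℝⁿ)`: `sup_{t>0} t · |{|f| > t}|^{1/p} < ∞`. -/
def MemWeakLp {n : ℕ} (p : ℝ) (f : (Fin n → ℝ) → ℝ) : Prop :=
  Measurable f ∧ ∃ C : ℝ≥0∞, C ≠ ⊤ ∧ ∀ t : ℝ, 0 < t →
    ENNReal.ofReal t * volume {x | t < |f x|} ^ (1 / p) ≤ C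


section Helpers
open Set



lemma meas_abs_rpow (c : ℝ) (hc : c ≠ 0) : Measurable fun t : ℝ => |t| ^ c := by
  have : (fun t : ℝ => |t| ^ c) =
      fun t => if t = 0 then 0 else Real.exp (Real.log |t| * c) := by
    funext t
    by_cases ht : t = 0
    · simp [ht, Real.zero_rpow hc]
    · rw [if_neg ht, Real.rpow_def_of_pos (abs_pos.2 ht)]
  rw [this]
  exact Measurable.ite (measurableSet_eq) measurable_const
    (((Real.measurable_log.comp measurable_abs).mul_const c).exp)

/-- Tonelli for products of one-variable functions on `Fin n → ℝ`. -/
lemma lintegral_pi_prod : ∀ {n : ℕ} (f : Fin n → ℝ → ℝ≥0∞), (∀ i, Measurable (f i)) →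
    ∫⁻ x : Fin n → ℝ, ∏ i, f i (x i) = ∏ i, ∫⁻ t, f i t := by
  intro n
  induction n with
  | zero => intro f _; simp [volume_pi]
  | succ n ih =>
    intro f hf
    have hmp := (measurePreserving_piFinSuccAbove (fun _ : Fin (n+1) => (volume : Measure ℝ)) 0).symm
    have hemb := (MeasurableEquiv.piFinSuccAbove (fun _ : Fin (n+1) => ℝ) 0).symm.measurableEmbedding
    rw [volume_pi, ← hmp.lintegral_comp_emb hemb]
    simp only [MeasurableEquiv.piFinSuccAbove_symm_apply, Fin.insertNthEquiv,
      Equiv.coe_fn_mk, Fin.insertNth_zero]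
    simp only [Fin.zero_succAbove, cast_eq]
    simp_rw [Fin.prod_univ_succ, Fin.cons_zero, Fin.cons_succ]
    have hg : Measurable fun y : Fin n → ℝ => ∏ x : Fin n, f x.succ (y x) :=
      Finset.measurable_prod _ fun j _ => (hf j.succ).comp (measurable_pi_apply j)
    rw [show (∫⁻ (a : ℝ × (Fin n → ℝ)), f 0 a.1 * ∏ x : Fin n, f x.succ (a.2 x)
          ∂(volume.prod (Measure.pi fun _ => volume))) =
        (∫⁻ t, f 0 t) * ∫⁻ y : Fin n → ℝ, ∏ x : Fin n, f x.succ (y x)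
          ∂(Measure.pi fun _ => (volume : Measure ℝ))
        from lintegral_prod_mul (hf 0).aemeasurable hg.aemeasurable, ← volume_pi,
      ih (fun j => f j.succ) (fun j => hf j.succ)]

lemma setLIntegral_pi_eval {n : ℕ} (i₀ : Fin n) (S : Fin n → Set ℝ)
    (hS : ∀ i, MeasurableSet (S i)) (g : ℝ → ℝ≥0∞) (hg : Measurable g) :
    ∫⁻ x in Set.univ.pi S, g (x i₀) =
      (∏ j ∈ Finset.univ.erase i₀, volume (S j)) * ∫⁻ t in S i₀, g t := by
  classical
  set F : Fin n → ℝ → ℝ≥0∞ :=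
    fun i t => if i = i₀ then (S i).indicator g t else (S i).indicator 1 t with hF
  have hQ : MeasurableSet (Set.univ.pi S) := MeasurableSet.univ_pi hS
  rw [← lintegral_indicator hQ]
  have hid : ∀ x : Fin n → ℝ,
      (Set.univ.pi S).indicator (fun x => g (x i₀)) x = ∏ i, F i (x i) := by
    intro x
    by_cases hx : x ∈ Set.univ.pi S
    · rw [Set.indicator_of_mem hx]
      have h1 : ∀ i, F i (x i) = if i = i₀ then g (x i₀) else 1 := by
        intro i
        by_cases hi : i = i₀
        · subst hi; simp [hF, Set.indicator_of_mem (hx i (Set.mem_univ i))]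
        · rw [hF]; simp only [if_neg hi]
          rw [Set.indicator_of_mem (hx i (Set.mem_univ i))]; rfl
      rw [Finset.prod_congr rfl fun i _ => h1 i,
        Finset.prod_ite_eq' Finset.univ i₀ (fun _ => g (x i₀)),
        if_pos (Finset.mem_univ i₀)]
    · rw [Set.indicator_of_notMem hx]
      have : ∃ j, x j ∉ S j := by
        by_contra h
        push_neg at h
        exact hx fun i _ => h i
      obtain ⟨j, hj⟩ := this
      symm
      refine Finset.prod_eq_zero (Finset.mem_univ j) ?_
      rw [hF]
      by_cases hji : j = i₀
      · subst hji; simp only [if_pos rfl]; exact Set.indicator_of_notMem hj g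
      · simp only [if_neg hji]; exact Set.indicator_of_notMem hj 1
  rw [lintegral_congr hid, lintegral_pi_prod F ?_]
  · rw [← Finset.mul_prod_erase Finset.univ _ (Finset.mem_univ i₀)]
    have h2 : ∫⁻ t, F i₀ t = ∫⁻ t in S i₀, g t := by
      rw [hF]; simp only [if_pos rfl]; exact lintegral_indicator (hS i₀) g
    have h3 : ∀ j ∈ Finset.univ.erase i₀, ∫⁻ t, F j t = volume (S j) := by
      intro j hj
      rw [hF]; simp only [if_neg (Finset.mem_erase.1 hj).1]
      exact lintegral_indicator_one (hS j)
    rw [h2, Finset.prod_congr rfl h3, mul_comm]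
  · intro i
    rw [hF]
    by_cases hi : i = i₀
    · simp only [if_pos hi]; exact hg.indicator (hS i)
    · simp only [if_neg hi]; exact measurable_const.indicator (hS i)

lemma lintegral_rpow_Ioc (L : ℝ) (hL : 0 ≤ L) :
    ∫⁻ t in Set.Ioc 0 L, ENNReal.ofReal (|t| ^ (-(1/2) : ℝ)) =
      ENNReal.ofReal (2 * L ^ ((1/2) : ℝ)) := by
  have hc : (-1 : ℝ) < -(1/2) := by norm_num
  have h1 : ∫⁻ t in Set.Ioc 0 L, ENNReal.ofReal (|t| ^ (-(1/2) : ℝ)) =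
      ∫⁻ t in Set.Ioc 0 L, ENNReal.ofReal (t ^ (-(1/2) : ℝ)) := by
    refine setLIntegral_congr_fun measurableSet_Ioc (fun t ht => ?_)
    rw [abs_of_pos ht.1]
  rw [h1, ← ofReal_integral_eq_lintegral_ofReal]
  · congr 1
    rw [← intervalIntegral.integral_of_le hL, integral_rpow (Or.inl hc)]
    rw [Real.zero_rpow (by norm_num : (-(1/2) : ℝ) + 1 ≠ 0)]
    norm_num
    ring
  · exact (intervalIntegral.intervalIntegrable_rpow' hc (a := 0) (b := L)).1
  · refine (ae_restrict_iff' measurableSet_Ioc).2 (ae_of_all _ fun t ht => ?_)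
    exact Real.rpow_nonneg ht.1.le _

lemma lintegral_abs_rpow_Icc (L : ℝ) (hL : 0 ≤ L) :
    ∫⁻ t in Set.Icc (-L) L, ENNReal.ofReal (|t| ^ (-(1/2) : ℝ)) ≤
      ENNReal.ofReal (4 * L ^ ((1/2) : ℝ)) := by
  have hmeas : Measurable fun t : ℝ => ENNReal.ofReal (|t| ^ (-(1/2) : ℝ)) :=
    (meas_abs_rpow _ (by norm_num)).ennreal_ofReal
  have hsplit : Set.Icc (-L) L = Set.Icc (-L) 0 ∪ Set.Ioc 0 L :=
    (Set.Icc_union_Ioc_eq_Icc (neg_nonpos.2 hL) hL).symm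
  have hneg : ∫⁻ t in Set.Icc (-L) (0:ℝ), ENNReal.ofReal (|t| ^ (-(1/2) : ℝ)) =
      ∫⁻ t in Set.Icc 0 L, ENNReal.ofReal (|t| ^ (-(1/2) : ℝ)) := by
    have hpre : Set.Icc (-L) (0:ℝ) = Neg.neg ⁻¹' Set.Icc (0:ℝ) L := by
      ext t
      simp only [Set.mem_Icc, Set.mem_preimage, Set.mem_Icc]
      constructor
      · rintro ⟨h1, h2⟩; exact ⟨by linarith, by linarith⟩
      · rintro ⟨h1, h2⟩; exact ⟨by linarith, by linarith⟩
    rw [hpre]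
    have := (Measure.measurePreserving_neg (volume : Measure ℝ)).setLIntegral_comp_preimage
      (measurableSet_Icc (a := (0:ℝ)) (b := L)) hmeas
    rw [← this]
    refine setLIntegral_congr_fun (measurableSet_Icc.preimage measurable_neg)
      (fun t _ => ?_)
    rw [abs_neg]
  have hIcc : ∫⁻ t in Set.Icc (0:ℝ) L, ENNReal.ofReal (|t| ^ (-(1/2) : ℝ)) =
      ∫⁻ t in Set.Ioc (0:ℝ) L, ENNReal.ofReal (|t| ^ (-(1/2) : ℝ)) :=
    setLIntegral_congr (MeasureTheory.Ioc_ae_eq_Icc).symm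
  calc ∫⁻ t in Set.Icc (-L) L, ENNReal.ofReal (|t| ^ (-(1/2) : ℝ))
      ≤ (∫⁻ t in Set.Icc (-L) (0:ℝ), ENNReal.ofReal (|t| ^ (-(1/2) : ℝ))) +
        ∫⁻ t in Set.Ioc (0:ℝ) L, ENNReal.ofReal (|t| ^ (-(1/2) : ℝ)) := by
        rw [hsplit]; exact lintegral_union_le _ _ _
    _ = ENNReal.ofReal (2 * L ^ ((1/2):ℝ)) + ENNReal.ofReal (2 * L ^ ((1/2):ℝ)) := by
        rw [hneg, hIcc, lintegral_rpow_Ioc L hL]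
    _ = ENNReal.ofReal (4 * L ^ ((1/2):ℝ)) := by
        rw [← ENNReal.ofReal_add (by positivity) (by positivity)]; ring_nf


lemma cube_volume {n : ℕ} (a : Fin n → ℝ) (l : ℝ) :
    volume (Set.univ.pi fun i => Set.Icc (a i) (a i + l)) = ENNReal.ofReal l ^ n := by
  rw [volume_pi_pi]
  simp [Real.volume_Icc, add_sub_cancel_left, Finset.prod_const, Finset.card_univ]

lemma cube_lintegral {n : ℕ} (i₀ : Fin n) (a : Fin n → ℝ) (l : ℝ)
    (g : ℝ → ℝ≥0∞) (hg : Measurable g) :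
    ∫⁻ x in Set.univ.pi fun i => Set.Icc (a i) (a i + l), g (x i₀) =
      ENNReal.ofReal l ^ (n - 1) * ∫⁻ t in Set.Icc (a i₀) (a i₀ + l), g t := by
  rw [setLIntegral_pi_eval i₀ _ (fun i => measurableSet_Icc) g hg]
  congr 1
  rw [Finset.prod_congr rfl (fun j _ => by rw [Real.volume_Icc, add_sub_cancel_left]),
    Finset.prod_const, Finset.card_erase_of_mem (Finset.mem_univ i₀), Finset.card_univ,
    Fintype.card_fin]

lemma le_maximal {n : ℕ} {Ω : Set (Fin n → ℝ)} (f : (Fin n → ℝ) → ℝ) (x : Fin n → ℝ)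
    {Q : Set (Fin n → ℝ)} (hQ : IsCube Q) (hsub : Q ⊆ Ω) (hx : x ∈ Q) :
    (volume Q)⁻¹ * ∫⁻ y in Q, ENNReal.ofReal |f y| ≤ maximal Ω f x := by
  unfold maximal
  exact le_iSup_of_le Q (le_iSup_of_le hQ (le_iSup_of_le hsub (le_iSup_of_le hx le_rfl)))

end Helpers


section A1toAp
open Set

lemma memA1_memApGT1 {n : ℕ} (p : ℝ) (hp : 1 < p) (w : (Fin n → ℝ) → ℝ)
    (h : MemA1 Set.univ w) : MemApGT1 Set.univ p w := by
  obtain ⟨hw, C, hC⟩ := h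
  rw [Measure.restrict_univ] at hC
  have hpos : ∀ᵐ x, 0 < w x := by
    have := hw.pos; rwa [Measure.restrict_univ] at this
  set C' : ℝ := max C 1 with hC'def
  have hC'1 : (1:ℝ) ≤ C' := le_max_right _ _
  have hC'0 : (0:ℝ) < C' := lt_of_lt_of_le one_pos hC'1
  have hC' : ∀ᵐ x, maximal Set.univ w x ≤ ENNReal.ofReal (C' * w x) := by
    filter_upwards [hC, hpos] with x h1 h2
    exact h1.trans (ENNReal.ofReal_le_ofReal
      (mul_le_mul_of_nonneg_right (le_max_left _ _) h2.le))
  refine ⟨hw, ENNReal.ofReal C', ENNReal.ofReal_ne_top, ?_⟩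
  rintro Q hQcube hQsub
  obtain ⟨a, l, hl, rfl⟩ := hQcube
  set Q := Set.univ.pi fun i => Set.Icc (a i) (a i + l) with hQdef
  have hQcube : IsCube Q := ⟨a, l, hl, rfl⟩
  have hQmeas : MeasurableSet Q := MeasurableSet.univ_pi fun i => measurableSet_Icc
  have hvol : volume Q = ENNReal.ofReal l ^ n := cube_volume a l
  have hvol0 : volume Q ≠ 0 := by
    rw [hvol]; exact pow_ne_zero _ (by simp [ENNReal.ofReal_eq_zero, not_le, hl])
  have hvolt : volume Q ≠ ⊤ := by
    rw [hvol]; exact ENNReal.pow_ne_top ENNReal.ofReal_ne_top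
  set A : ℝ≥0∞ := (volume Q)⁻¹ * ∫⁻ x in Q, ENNReal.ofReal (w x) with hAdef
  have hint : ∫⁻ x in Q, ENNReal.ofReal (w x) ≠ ⊤ := by
    have h2 := (hw.locInt Q hQcube (Set.subset_univ Q)).2
    refine ne_top_of_le_ne_top h2.ne ?_
    exact lintegral_mono fun x => Real.ofReal_le_enorm (w x)
  have hAt : A ≠ ⊤ := by
    rw [hAdef]
    exact ENNReal.mul_ne_top (ENNReal.inv_ne_top.2 hvol0) hint
  have hA0 : A ≠ 0 := by
    rw [hAdef]
    intro hA
    rcases mul_eq_zero.1 hA with h | h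
    · exact hvolt (ENNReal.inv_eq_zero.1 h)
    · have hz := (lintegral_eq_zero_iff hw.measurable.ennreal_ofReal).1 h
      have hposQ : ∀ᵐ x ∂(volume.restrict Q), 0 < w x := ae_restrict_of_ae hpos
      have : ∀ᵐ x ∂(volume.restrict Q), False := by
        filter_upwards [hz, hposQ] with x h1 h2
        simp only [Pi.zero_apply, ENNReal.ofReal_eq_zero] at h1
        linarith
      have hz2 : volume.restrict Q Set.univ = 0 := by simpa [ae_iff] using this
      rw [Measure.restrict_apply_univ] at hz2
      exact hvol0 hz2
  set r : ℝ := 1 - p / (p - 1) with hrdef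
  have hp1 : p - 1 ≠ 0 := by linarith
  have hrlt : r < 0 := by
    rw [hrdef]
    have h1 : 1 < p / (p - 1) := (one_lt_div (by linarith)).2 (by linarith)
    linarith
  have hrp : r * (p - 1) = -1 := by rw [hrdef]; field_simp; ring
  have hC0' : ENNReal.ofReal C' ≠ 0 := by
    simp only [ne_eq, ENNReal.ofReal_eq_zero, not_le]; exact hC'0
  set B : ℝ≥0∞ := A * (ENNReal.ofReal C')⁻¹ with hBdef
  have hB0 : B ≠ 0 := by
    rw [hBdef]
    exact mul_ne_zero hA0 (ENNReal.inv_ne_zero.2 ENNReal.ofReal_ne_top)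
  have hBt : B ≠ ⊤ := ENNReal.mul_ne_top hAt (ENNReal.inv_ne_top.2 hC0')
  have hkey : ∀ᵐ x ∂(volume.restrict Q), ENNReal.ofReal (w x ^ r) ≤ B ^ r := by
    filter_upwards [ae_restrict_of_ae hC', ae_restrict_of_ae hpos,
      ae_restrict_mem hQmeas] with x h1 h2 hxQ
    have hmax : A ≤ ENNReal.ofReal C' * ENNReal.ofReal (w x) := by
      have hA_le : A ≤ maximal Set.univ w x := by
        refine le_trans ?_ (le_maximal w x hQcube (Set.subset_univ Q) hxQ)
        exact mul_le_mul_right (lintegral_mono fun y =>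
          ENNReal.ofReal_le_ofReal (le_abs_self _)) _
      rw [← ENNReal.ofReal_mul hC'0.le]
      exact hA_le.trans h1
    have hBle : B ≤ ENNReal.ofReal (w x) := by
      calc B ≤ (ENNReal.ofReal C' * ENNReal.ofReal (w x)) * (ENNReal.ofReal C')⁻¹ :=
            mul_le_mul_left hmax _
        _ = ENNReal.ofReal (w x) := by
            rw [mul_comm (ENNReal.ofReal C'), mul_assoc,
              ENNReal.mul_inv_cancel hC0' ENNReal.ofReal_ne_top, mul_one]
    have h3 : B ^ (-r) ≤ ENNReal.ofReal (w x) ^ (-r) :=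
      ENNReal.rpow_le_rpow hBle (by linarith)
    calc ENNReal.ofReal (w x ^ r) = ENNReal.ofReal (w x) ^ r :=
          (ENNReal.ofReal_rpow_of_pos h2).symm
      _ = (ENNReal.ofReal (w x) ^ (-r))⁻¹ := by rw [← ENNReal.rpow_neg, neg_neg]
      _ ≤ (B ^ (-r))⁻¹ := ENNReal.inv_le_inv.2 h3
      _ = B ^ r := by rw [← ENNReal.rpow_neg, neg_neg]
  have hσavg : (volume Q)⁻¹ * ∫⁻ x in Q, ENNReal.ofReal (w x ^ r) ≤ B ^ r := by
    calc (volume Q)⁻¹ * ∫⁻ x in Q, ENNReal.ofReal (w x ^ r)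
        ≤ (volume Q)⁻¹ * ∫⁻ _ in Q, B ^ r :=
          mul_le_mul_right (lintegral_mono_ae hkey) _
      _ = (volume Q)⁻¹ * (B ^ r * volume Q) := by rw [setLIntegral_const]
      _ = B ^ r * (volume Q * (volume Q)⁻¹) := by ring
      _ = B ^ r := by rw [ENNReal.mul_inv_cancel hvol0 hvolt, mul_one]
  calc A * ((volume Q)⁻¹ * ∫⁻ x in Q, ENNReal.ofReal (w x ^ r)) ^ (p - 1)
      ≤ A * (B ^ r) ^ (p - 1) :=
        mul_le_mul_right (ENNReal.rpow_le_rpow hσavg (by linarith)) _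
    _ = A * B⁻¹ := by rw [← ENNReal.rpow_mul, hrp, ENNReal.rpow_neg_one]
    _ = A * (A⁻¹ * ENNReal.ofReal C') := by
        rw [hBdef, ENNReal.mul_inv (Or.inl hA0) (Or.inl hAt), inv_inv]
    _ = ENNReal.ofReal C' := by
        rw [← mul_assoc, ENNReal.mul_inv_cancel hA0 hAt, one_mul]

end A1toAp


section PowerWeight

lemma far_const (p d : ℝ) (hp : 1 < p) (hd : 0 < d) :
    (2*d) ^ ((p-1)/2) * (d ^ (-(1/2):ℝ)) ^ (p-1) = 2 ^ ((p-1)/2) := by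
  rw [← Real.rpow_mul hd.le, Real.mul_rpow (by norm_num) hd.le, mul_assoc,
    ← Real.rpow_add hd, show (p-1)/2 + -(1/2)*(p-1) = 0 by ring, Real.rpow_zero, mul_one]

lemma near_const (p l : ℝ) (hp : 1 < p) (hl : 0 < l) :
    (2*l) ^ ((p-1)/2) * (4*(2*l) ^ ((1:ℝ)/2)/l) ^ (p-1) = 8 ^ (p-1) := by
  have h2l : (0:ℝ) < 2 * l := by linarith
  have hL : (0:ℝ) < (2*l) ^ ((p-1)/2) * (4*(2*l) ^ ((1:ℝ)/2)/l) ^ (p-1) := by positivity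
  have hR : (0:ℝ) < (8:ℝ) ^ (p-1) := by positivity
  apply Real.log_injOn_pos (Set.mem_Ioi.2 hL) (Set.mem_Ioi.2 hR)
  rw [Real.log_mul (by positivity) (by positivity), Real.log_rpow h2l,
    Real.log_rpow (by norm_num : (0:ℝ) < 8)]
  rw [Real.log_rpow (by positivity), Real.log_div (by positivity) hl.ne',
    Real.log_mul (by norm_num) (by positivity),
    Real.log_mul (by norm_num) (by positivity),
    Real.log_rpow h2l, Real.log_mul (by norm_num) hl.ne']
  have h8 : Real.log 8 = 3 * Real.log 2 := by
    rw [show (8:ℝ) = 2^(3:ℕ) by norm_num, Real.log_pow]; push_cast; ring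
  have h4 : Real.log 4 = 2 * Real.log 2 := by
    rw [show (4:ℝ) = 2^(2:ℕ) by norm_num, Real.log_pow]; push_cast; ring
  rw [h8, h4]
  ring

lemma powerWeight_isWeight {n : ℕ} (i₀ : Fin n) (α : ℝ) (hα : 0 < α) :
    IsWeight Set.univ (fun x : Fin n → ℝ => |x i₀| ^ α) := by
  have hmeas : Measurable fun x : Fin n → ℝ => |x i₀| ^ α :=
    (meas_abs_rpow α hα.ne').comp (measurable_pi_apply i₀)
  refine ⟨hmeas, ?_, ?_⟩
  · rw [Measure.restrict_univ]
    have hnull : volume {x : Fin n → ℝ | x i₀ = 0} = 0 := by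
      have h1 : {x : Fin n → ℝ | x i₀ = 0} = Function.eval i₀ ⁻¹' ({0} : Set ℝ) := rfl
      rw [h1, volume_pi]
      exact Measure.pi_eval_preimage_null _ (by simp)
    have hne : ∀ᵐ x : Fin n → ℝ, x i₀ ≠ 0 := by
      rw [ae_iff]; simpa using hnull
    filter_upwards [hne] with x hx
    exact Real.rpow_pos_of_pos (abs_pos.2 hx) α
  · rintro Q ⟨a, l, hl, rfl⟩ -
    set M := max |a i₀| |a i₀ + l| with hM
    refine Measure.integrableOn_of_bounded (M := M ^ α) ?_ hmeas.aestronglyMeasurable ?_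
    · rw [cube_volume]; exact ENNReal.pow_ne_top ENNReal.ofReal_ne_top
    · refine (ae_restrict_iff' (MeasurableSet.univ_pi fun i => measurableSet_Icc)).2
        (ae_of_all _ fun x hx => ?_)
      have hx0 := hx i₀ (Set.mem_univ i₀)
      rw [Real.norm_eq_abs, abs_of_nonneg (Real.rpow_nonneg (abs_nonneg _) _)]
      exact Real.rpow_le_rpow (abs_nonneg _) (abs_le_max_abs_abs hx0.1 hx0.2) hα.le

lemma powerWeight_memApGT1 {n : ℕ} (i₀ : Fin n) (p : ℝ) (hp : 1 < p) :
    MemApGT1 Set.univ p (fun x : Fin n → ℝ => |x i₀| ^ ((p-1)/2)) := by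
  have hp1 : p - 1 ≠ 0 := by linarith
  set α : ℝ := (p-1)/2 with hαdef
  have hα0 : 0 < α := by rw [hαdef]; linarith
  refine ⟨powerWeight_isWeight i₀ α hα0,
    ENNReal.ofReal (2 ^ α + 8 ^ (p-1)), ENNReal.ofReal_ne_top, ?_⟩
  rintro Q ⟨a, l, hl, rfl⟩ -
  simp only
  set I := Set.Icc (a i₀) (a i₀ + l) with hIdef
  set e := ENNReal.ofReal l with hedef
  have he0 : e ≠ 0 := by
    rw [hedef]; simp only [ne_eq, ENNReal.ofReal_eq_zero, not_le]; exact hl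
  have het : e ≠ ⊤ := ENNReal.ofReal_ne_top
  have hn1 : n - 1 + 1 = n := Nat.succ_pred_eq_of_pos i₀.pos
  have hvol : volume (Set.univ.pi fun i => Set.Icc (a i) (a i + l)) = e ^ n := cube_volume a l
  have hen0 : e ^ (n-1) ≠ 0 := pow_ne_zero _ he0
  have hent : e ^ (n-1) ≠ ⊤ := ENNReal.pow_ne_top het
  have hpowinv : (e ^ n)⁻¹ * e ^ (n-1) = e⁻¹ := by
    obtain ⟨m, hm⟩ : ∃ m, n = m + 1 := ⟨n - 1, (Nat.succ_pred_eq_of_pos i₀.pos).symm⟩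
    subst hm
    simp only [Nat.add_sub_cancel]
    rw [pow_succ, ENNReal.mul_inv (Or.inl (pow_ne_zero _ he0)) (Or.inl (ENNReal.pow_ne_top het)),
      mul_comm ((e ^ m)⁻¹) e⁻¹, mul_assoc,
      ENNReal.inv_mul_cancel (pow_ne_zero _ he0) (ENNReal.pow_ne_top het), mul_one]
  have hσint : ∀ x : Fin n → ℝ,
      ENNReal.ofReal ((|x i₀| ^ α) ^ (1 - p/(p-1))) =
        ENNReal.ofReal (|x i₀| ^ (-(1/2):ℝ)) := by
    intro x
    rw [← Real.rpow_mul (abs_nonneg _),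
      show α * (1 - p/(p-1)) = -(1/2) by rw [hαdef]; field_simp; ring]
  have hJw : ∫⁻ x in Set.univ.pi fun i => Set.Icc (a i) (a i + l),
      ENNReal.ofReal (|x i₀| ^ α) = e ^ (n-1) * ∫⁻ t in I, ENNReal.ofReal (|t| ^ α) :=
    cube_lintegral i₀ a l _ (meas_abs_rpow α hα0.ne').ennreal_ofReal
  have hJσ : ∫⁻ x in Set.univ.pi fun i => Set.Icc (a i) (a i + l),
      ENNReal.ofReal ((|x i₀| ^ α) ^ (1 - p/(p-1))) =
        e ^ (n-1) * ∫⁻ t in I, ENNReal.ofReal (|t| ^ (-(1/2):ℝ)) := by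
    rw [lintegral_congr hσint]
    exact cube_lintegral i₀ a l _ (meas_abs_rpow _ (by norm_num)).ennreal_ofReal
  rw [hvol, hJw, hJσ, ← mul_assoc, hpowinv, ← mul_assoc, hpowinv]
  set Jw := ∫⁻ t in I, ENNReal.ofReal (|t| ^ α) with hJwdef
  set Jσ := ∫⁻ t in I, ENNReal.ofReal (|t| ^ (-(1/2):ℝ)) with hJσdef
  have hvolI : volume I = e := by
    rw [hIdef, Real.volume_Icc, add_sub_cancel_left, hedef]
  have havg : ∀ (g : ℝ → ℝ≥0∞) (c : ℝ), (∀ t ∈ I, g t ≤ ENNReal.ofReal c) →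
      e⁻¹ * (∫⁻ t in I, g t) ≤ ENNReal.ofReal c := by
    intro g c hg
    have h1 : ∫⁻ t in I, g t ≤ ENNReal.ofReal c * volume I := by
      calc ∫⁻ t in I, g t ≤ ∫⁻ _ in I, ENNReal.ofReal c :=
            lintegral_mono_ae ((ae_restrict_iff' measurableSet_Icc).2 (ae_of_all _ hg))
        _ = ENNReal.ofReal c * volume I := setLIntegral_const _ _
    calc e⁻¹ * (∫⁻ t in I, g t) ≤ e⁻¹ * (ENNReal.ofReal c * volume I) :=
          mul_le_mul_right h1 _
      _ = ENNReal.ofReal c * (e⁻¹ * e) := by rw [hvolI]; ring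
      _ = ENNReal.ofReal c := by rw [ENNReal.inv_mul_cancel he0 het, mul_one]
  by_cases hfar : ∀ t ∈ I, l ≤ |t|
  · -- far case
    have hdex : ∃ d : ℝ, 0 < d ∧ ∀ t ∈ I, d ≤ |t| ∧ |t| ≤ 2*d := by
      by_cases hc : 0 < a i₀
      · have hla : l ≤ a i₀ := by
          have := hfar (a i₀) ⟨le_rfl, by linarith⟩
          rwa [abs_of_pos hc] at this
        refine ⟨a i₀, hc, fun t ht => ?_⟩
        rw [hIdef, Set.mem_Icc] at ht
        have ht0 : 0 < t := lt_of_lt_of_le hc ht.1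
        rw [abs_of_pos ht0]
        exact ⟨ht.1, by linarith [ht.2]⟩
      · push_neg at hc
        have hneg : a i₀ + l < 0 := by
          by_contra hge
          push_neg at hge
          have h0I : (0:ℝ) ∈ I := by rw [hIdef]; exact ⟨hc, hge⟩
          have := hfar 0 h0I
          rw [abs_zero] at this
          linarith
        have hla : l ≤ -(a i₀ + l) := by
          have := hfar (a i₀ + l) ⟨by linarith, le_rfl⟩
          rwa [abs_of_neg hneg] at this
        refine ⟨-(a i₀ + l), by linarith, fun t ht => ?_⟩
        rw [hIdef, Set.mem_Icc] at ht
        have ht0 : t < 0 := by linarith [ht.2]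
        rw [abs_of_neg ht0]
        constructor <;> linarith [ht.1, ht.2]
    obtain ⟨d, hd0, hbound⟩ := hdex
    calc (e⁻¹ * Jw) * (e⁻¹ * Jσ) ^ (p-1)
        ≤ ENNReal.ofReal ((2*d) ^ α) * (ENNReal.ofReal (d ^ (-(1/2):ℝ))) ^ (p-1) := by
          refine mul_le_mul' (havg _ _ fun t ht => ?_)
            (ENNReal.rpow_le_rpow (havg _ _ fun t ht => ?_) (by linarith))
          · exact ENNReal.ofReal_le_ofReal
              (Real.rpow_le_rpow (abs_nonneg _) (hbound t ht).2 hα0.le)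
          · exact ENNReal.ofReal_le_ofReal
              (Real.rpow_le_rpow_of_nonpos hd0 (hbound t ht).1 (by norm_num))
      _ = ENNReal.ofReal ((2*d) ^ α * (d ^ (-(1/2):ℝ)) ^ (p-1)) := by
          rw [ENNReal.ofReal_rpow_of_pos (Real.rpow_pos_of_pos hd0 _),
            ← ENNReal.ofReal_mul (by positivity)]
      _ ≤ ENNReal.ofReal (2 ^ α + 8 ^ (p-1)) := by
          rw [far_const p d hp hd0]
          exact ENNReal.ofReal_le_ofReal (le_add_of_nonneg_right (by positivity))
  · -- near case
    push_neg at hfar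
    obtain ⟨t₀, ht₀I, ht₀⟩ := hfar
    rw [hIdef, Set.mem_Icc] at ht₀I
    have habs : ∀ t ∈ I, |t| ≤ 2*l := by
      intro t ht
      rw [hIdef, Set.mem_Icc] at ht
      have h1 : |t - t₀| ≤ l := abs_le.2 ⟨by linarith [ht.1, ht₀I.2], by linarith [ht.2, ht₀I.1]⟩
      calc |t| = |t₀ + (t - t₀)| := by ring_nf
        _ ≤ |t₀| + |t - t₀| := abs_add_le _ _
        _ ≤ 2*l := by linarith
    have hsub : I ⊆ Set.Icc (-(2*l)) (2*l) := fun t ht => abs_le.1 (habs t ht)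
    have hσbound : e⁻¹ * Jσ ≤ ENNReal.ofReal (4*(2*l) ^ ((1:ℝ)/2)/l) := by
      have h1 : Jσ ≤ ENNReal.ofReal (4*(2*l) ^ ((1:ℝ)/2)) := by
        rw [hJσdef]
        exact (lintegral_mono_set hsub).trans (lintegral_abs_rpow_Icc (2*l) (by linarith))
      calc e⁻¹ * Jσ ≤ e⁻¹ * ENNReal.ofReal (4*(2*l) ^ ((1:ℝ)/2)) := mul_le_mul_right h1 _
        _ = ENNReal.ofReal (4*(2*l) ^ ((1:ℝ)/2)/l) := by
            rw [ENNReal.ofReal_div_of_pos hl, ENNReal.div_eq_inv_mul, hedef]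
    calc (e⁻¹ * Jw) * (e⁻¹ * Jσ) ^ (p-1)
        ≤ ENNReal.ofReal ((2*l) ^ α) * (ENNReal.ofReal (4*(2*l) ^ ((1:ℝ)/2)/l)) ^ (p-1) := by
          refine mul_le_mul' (havg _ _ fun t ht => ?_)
            (ENNReal.rpow_le_rpow hσbound (by linarith))
          exact ENNReal.ofReal_le_ofReal
            (Real.rpow_le_rpow (abs_nonneg _) (habs t ht) hα0.le)
      _ = ENNReal.ofReal ((2*l) ^ α * (4*(2*l) ^ ((1:ℝ)/2)/l) ^ (p-1)) := by
          rw [ENNReal.ofReal_rpow_of_pos (by positivity),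
            ← ENNReal.ofReal_mul (by positivity)]
      _ ≤ ENNReal.ofReal (2 ^ α + 8 ^ (p-1)) := by
          rw [near_const p l hp hl]
          exact ENNReal.ofReal_le_ofReal (le_add_of_nonneg_left (by positivity))

end PowerWeight


section NoA1

lemma pow_inv_mul_pow_pred {e : ℝ≥0∞} (he0 : e ≠ 0) (het : e ≠ ⊤) {n : ℕ} (hn : 0 < n) :
    (e ^ n)⁻¹ * e ^ (n-1) = e⁻¹ := by
  obtain ⟨m, rfl⟩ : ∃ m, n = m + 1 := ⟨n-1, (Nat.succ_pred_eq_of_pos hn).symm⟩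
  simp only [Nat.add_sub_cancel]
  rw [pow_succ, ENNReal.mul_inv (Or.inl (pow_ne_zero _ he0)) (Or.inl (ENNReal.pow_ne_top het)),
    mul_comm ((e ^ m)⁻¹) e⁻¹, mul_assoc,
    ENNReal.inv_mul_cancel (pow_ne_zero _ he0) (ENNReal.pow_ne_top het), mul_one]

lemma maximal_eq_top {n : ℕ} (i₀ : Fin n) (α : ℝ) (hα : 0 < α) (v : (Fin n → ℝ) → ℝ)
    (hv : ∀ᵐ y : Fin n → ℝ, |y i₀| ^ α ≤ v y) (x : Fin n → ℝ) :
    maximal Set.univ v x = ⊤ := by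
  classical
  apply ENNReal.eq_top_of_forall_nnreal_le
  intro r
  set s : ℝ := max 1 ((4 * (r:ℝ)) ^ α⁻¹) with hs
  set R : ℝ := 2 * (s + ‖x‖) with hRdef
  have hs1 : (1:ℝ) ≤ s := le_max_left _ _
  have hxnorm : (0:ℝ) ≤ ‖x‖ := norm_nonneg x
  have hR2 : 2 ≤ R := by rw [hRdef]; linarith
  have hR0 : 0 < R := by linarith
  have hRhalf : R / 2 = s + ‖x‖ := by rw [hRdef]; ring
  have hhalf : (4:ℝ) * r ≤ (R/2) ^ α := by
    have h1 : (4 * (r:ℝ)) ^ α⁻¹ ≤ R / 2 := by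
      rw [hRhalf]
      calc (4 * (r:ℝ)) ^ α⁻¹ ≤ s := le_max_right _ _
        _ ≤ s + ‖x‖ := by linarith
    calc (4:ℝ) * r = ((4 * (r:ℝ)) ^ α⁻¹) ^ α := (Real.rpow_inv_rpow (by positivity) hα.ne').symm
      _ ≤ (R/2) ^ α := Real.rpow_le_rpow (by positivity) h1 hα.le
  set Q : Set (Fin n → ℝ) := Set.univ.pi fun _ => Set.Icc (-R) (-R + 2*R) with hQdef
  have hQcube : IsCube Q := ⟨fun _ => -R, 2*R, by linarith, rfl⟩
  have hxQ : x ∈ Q := by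
    intro i _
    have h1 := norm_le_pi_norm x i
    rw [Real.norm_eq_abs] at h1
    have h2 := abs_le.1 h1
    simp only [Set.mem_Icc]
    constructor <;> [linarith [hRhalf, h2.1]; linarith [hRhalf, h2.2]]
  refine le_trans ?_ (le_maximal v x hQcube (Set.subset_univ Q) hxQ)
  set Q' : Set (Fin n → ℝ) :=
    Set.univ.pi fun i => if i = i₀ then Set.Icc (R/2) R else Set.Icc (-R) (-R + 2*R) with hQ'def
  have hQ'meas : MeasurableSet Q' := by
    refine MeasurableSet.univ_pi fun i => ?_
    by_cases h : i = i₀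
    · rw [if_pos h]; exact measurableSet_Icc
    · rw [if_neg h]; exact measurableSet_Icc
  have hQ'sub : Q' ⊆ Q := by
    intro y hy i hi
    have h1 := hy i (Set.mem_univ i)
    by_cases h : i = i₀
    · simp only [if_pos h, Set.mem_Icc] at h1
      simp only [Set.mem_Icc]
      constructor <;> [linarith [h1.1]; linarith [h1.2]]
    · simp only [if_neg h] at h1
      exact h1
  have hvolQ : volume Q = ENNReal.ofReal (2*R) ^ n := cube_volume _ _
  have hvolQ' : volume Q' = ENNReal.ofReal (R/2) * ENNReal.ofReal (2*R) ^ (n-1) := by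
    rw [hQ'def, volume_pi_pi, ← Finset.mul_prod_erase Finset.univ _ (Finset.mem_univ i₀),
      if_pos rfl]
    congr 1
    · rw [Real.volume_Icc]; congr 1; ring
    · rw [Finset.prod_congr rfl (fun j hj => by
        rw [if_neg (Finset.mem_erase.1 hj).1, Real.volume_Icc,
          show -R + 2*R - -R = 2*R by ring]),
        Finset.prod_const, Finset.card_erase_of_mem (Finset.mem_univ i₀), Finset.card_univ,
        Fintype.card_fin]
  have hE0 : ENNReal.ofReal (2*R) ≠ 0 := by
    simp only [ne_eq, ENNReal.ofReal_eq_zero, not_le]; linarith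
  have hratio : (volume Q)⁻¹ * volume Q' = ENNReal.ofReal (1/4) := by
    rw [hvolQ, hvolQ']
    calc (ENNReal.ofReal (2*R) ^ n)⁻¹ *
          (ENNReal.ofReal (R/2) * ENNReal.ofReal (2*R) ^ (n-1))
        = ENNReal.ofReal (R/2) *
          ((ENNReal.ofReal (2*R) ^ n)⁻¹ * ENNReal.ofReal (2*R) ^ (n-1)) := by ring
      _ = ENNReal.ofReal (R/2) * (ENNReal.ofReal (2*R))⁻¹ := by
          rw [pow_inv_mul_pow_pred hE0 ENNReal.ofReal_ne_top i₀.pos]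
      _ = ENNReal.ofReal (R/2) / ENNReal.ofReal (2*R) := (div_eq_mul_inv _ _).symm
      _ = ENNReal.ofReal ((R/2)/(2*R)) := (ENNReal.ofReal_div_of_pos (by linarith)).symm
      _ = ENNReal.ofReal (1/4) := by
          congr 1
          field_simp
          ring
  have hlow : ENNReal.ofReal ((R/2)^α) * volume Q' ≤ ∫⁻ y in Q, ENNReal.ofReal |v y| := by
    have hae : ∀ᵐ y ∂(volume.restrict Q'),
        ENNReal.ofReal ((R/2)^α) ≤ ENNReal.ofReal |v y| := by
      filter_upwards [ae_restrict_of_ae hv, ae_restrict_mem hQ'meas] with y h1 h2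
      have h3 : R/2 ≤ |y i₀| := by
        have h4 := h2 i₀ (Set.mem_univ i₀)
        simp only [if_pos rfl, Set.mem_Icc] at h4
        calc R/2 ≤ y i₀ := h4.1
          _ ≤ |y i₀| := le_abs_self _
      refine ENNReal.ofReal_le_ofReal ?_
      calc (R/2)^α ≤ |y i₀|^α := Real.rpow_le_rpow (by positivity) h3 hα.le
        _ ≤ v y := h1
        _ ≤ |v y| := le_abs_self _
    calc ENNReal.ofReal ((R/2)^α) * volume Q'
        = ∫⁻ _ in Q', ENNReal.ofReal ((R/2)^α) := (setLIntegral_const _ _).symm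
      _ ≤ ∫⁻ y in Q', ENNReal.ofReal |v y| := lintegral_mono_ae hae
      _ ≤ ∫⁻ y in Q, ENNReal.ofReal |v y| := lintegral_mono_set hQ'sub
  calc (r : ℝ≥0∞) = ENNReal.ofReal (r:ℝ) := ENNReal.ofReal_coe_nnreal.symm
    _ ≤ ENNReal.ofReal ((R/2)^α * (1/4)) := ENNReal.ofReal_le_ofReal (by nlinarith [hhalf])
    _ = ENNReal.ofReal ((R/2)^α) * ENNReal.ofReal (1/4) :=
        ENNReal.ofReal_mul (by positivity)
    _ = ENNReal.ofReal ((R/2)^α) * ((volume Q)⁻¹ * volume Q') := by rw [hratio]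
    _ = (volume Q)⁻¹ * (ENNReal.ofReal ((R/2)^α) * volume Q') := by ring
    _ ≤ (volume Q)⁻¹ * ∫⁻ y in Q, ENNReal.ofReal |v y| := mul_le_mul_right hlow _

lemma no_A1_majorant {n : ℕ} (i₀ : Fin n) (α : ℝ) (hα : 0 < α) :
    ¬ HasApMajorant Set.univ 1 (fun x : Fin n → ℝ => |x i₀| ^ α) := by
  rintro ⟨-, v, hv, hle⟩
  rw [Measure.restrict_univ] at hle
  have hmemA1 : MemA1 Set.univ v := by
    rcases hv with ⟨-, h⟩ | ⟨h, -⟩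
    · exact h
    · exact absurd h (lt_irrefl 1)
  obtain ⟨-, C, hC⟩ := hmemA1
  rw [Measure.restrict_univ] at hC
  have hvge : ∀ᵐ y : Fin n → ℝ, |y i₀| ^ α ≤ v y := by
    filter_upwards [hle] with y hy
    exact le_trans (le_abs_self _) hy
  have htop := maximal_eq_top i₀ α hα v hvge
  have hFalse : ∀ᵐ x : Fin n → ℝ, False := by
    filter_upwards [hC] with x hx
    rw [htop x] at hx
    exact absurd (lt_of_le_of_lt hx ENNReal.ofReal_lt_top) (lt_irrefl ⊤)
  have h0 : (volume : Measure (Fin n → ℝ)) Set.univ = 0 := by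
    simpa [ae_iff] using hFalse
  have hne : (volume : Measure (Fin n → ℝ)) Set.univ ≠ 0 := by
    rw [volume_pi, Measure.pi_univ]
    simp only [Real.volume_univ, Finset.prod_const, Finset.card_univ, Fintype.card_fin]
    exact pow_ne_zero _ ENNReal.top_ne_zero
  exact hne h0

end NoA1

theorem stmt5 (n : ℕ) (hn : 0 < n) (p : ℝ) (hp : 1 < p) :
    {f : (Fin n → ℝ) → ℝ | HasApMajorant Set.univ 1 f} ⊂
      {f | HasApMajorant Set.univ p f} := by
  have i₀ : Fin n := ⟨0, hn⟩
  constructor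
  · rintro f ⟨hf, w, hw, hle⟩
    refine ⟨hf, w, ?_, hle⟩
    have hw1 : MemA1 Set.univ w := by
      rcases hw with ⟨-, h⟩ | ⟨h, -⟩
      · exact h
      · exact absurd h (lt_irrefl 1)
    exact Or.inr ⟨hp, memA1_memApGT1 p hp w hw1⟩
  · intro hcontra
    have hα0 : 0 < (p-1)/2 := by linarith
    have hmem : (fun x : Fin n → ℝ => |x i₀| ^ ((p-1)/2)) ∈
        {f | HasApMajorant Set.univ p f} := by
      refine ⟨(meas_abs_rpow _ hα0.ne').comp (measurable_pi_apply i₀),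
        _, Or.inr ⟨hp, powerWeight_memApGT1 i₀ p hp⟩, ?_⟩
      refine ae_of_all _ fun x => ?_
      rw [abs_of_nonneg (Real.rpow_nonneg (abs_nonneg _) _)]
    exact no_A1_majorant i₀ _ hα0 (hcontra hmem)
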